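/- Let Q = {1,…,q_max} be finite, let each map û ↦ f_q(û, ∇J(û)) be OSC, LB, and nonempty- and convex-valued relative to Û, and suppose that for each q ∈ Q the compact set 𝒪 is UGAS for the constrained differential inclusion û̇ ∈ f_q(û, ∇J(û)), û ∈ Û. Fix N₀ ≥ 1. Then the switching hybrid system with average dwell-time automaton, namely the hybrid system with state (û,q,τ₁) ∈ ℝ^n×Q×ℝ, flows (û̇ ∈ f_q(û,∇J(û)), q̇ = 0, τ̇₁ ∈ [0,η₁]) on Û×Q×[0,N₀], and jumps (û⁺ = û, q⁺ ∈ Q∖{q}, τ₁⁺ = τ₁ − 1) on Û×Q×[1,N₀], renders the compact set 𝒪×Q×[0,N₀] SGPAS as η₁ → 0⁺. -/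

import Mathlib

open Set Filter Metric MeasureTheory Topology
open scoped RealInnerProductSpace

noncomputable section

namespace HS

/-- Euclidean space `ℝ^n`. -/
abbrev E (n : ℕ) : Type := EuclideanSpace ℝ (Fin n)

/-- Data of a hybrid system `H = (C, F, D, G)`: flows `ẋ ∈ F x` on `C`,
jumps `x⁺ ∈ G x` on `D`. -/
structure System (X : Type*) where
  C : Set X
  F : X → Set X
  D : Set X
  G : X → Set X

variable {X Y : Type*}

/-- Outer semicontinuity of a set-valued map relative to a set `K` (sequential form). -/
def OSCRel [TopologicalSpace X] [TopologicalSpace Y] (M : X → Set Y) (K : Set X) : Prop :=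
  ∀ (z : X) (s : Y) (zs : ℕ → X) (ss : ℕ → Y),
    z ∈ K → (∀ i, zs i ∈ K) → Tendsto zs atTop (𝓝 z) →
    (∀ i, ss i ∈ M (zs i)) → Tendsto ss atTop (𝓝 s) → s ∈ M z

/-- Local boundedness of a set-valued map relative to a set `K`. -/
def LocBddRel [TopologicalSpace X] [Bornology Y] (M : X → Set Y) (K : Set X) : Prop :=
  ∀ z ∈ K, ∃ U : Set X, IsOpen U ∧ z ∈ U ∧ Bornology.IsBounded (⋃ x ∈ U ∩ K, M x)

/-- The Hybrid Basic Conditions. -/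
def BasicConditions [NormedAddCommGroup X] [NormedSpace ℝ X] (H : System X) : Prop :=
  IsClosed H.C ∧ IsClosed H.D ∧
  OSCRel H.F H.C ∧ LocBddRel H.F H.C ∧
  (∀ x ∈ H.C, (H.F x).Nonempty ∧ Convex ℝ (H.F x)) ∧
  OSCRel H.G H.D ∧ LocBddRel H.G H.D ∧ (∀ x ∈ H.D, (H.G x).Nonempty)

/-- Compact hybrid time domains. -/
def IsCompactHTD (E : Set (ℝ × ℕ)) : Prop :=
  ∃ (J : ℕ) (t : ℕ → ℝ), t 0 = 0 ∧ (∀ j, j < J → t j ≤ t (j+1)) ∧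
    E = ⋃ j ∈ Finset.range J, Icc (t j) (t (j+1)) ×ˢ ({j} : Set ℕ)

/-- Hybrid time domains: unions of nondecreasing sequences of compact hybrid time domains. -/
def IsHTD (E : Set (ℝ × ℕ)) : Prop :=
  ∃ Ek : ℕ → Set (ℝ × ℕ), (∀ k, IsCompactHTD (Ek k)) ∧ Monotone Ek ∧ E = ⋃ k, Ek k

/-- A hybrid arc: a function defined on a hybrid time domain containing `(0,0)`. -/
structure Arc (X : Type*) where
  dom : Set (ℝ × ℕ)
  htd : IsHTD dom
  init : ((0:ℝ), (0:ℕ)) ∈ dom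
  val : ℝ × ℕ → X

/-- The `j`-th flow interval `I_j` of a hybrid time domain. -/
def slice (dom : Set (ℝ × ℕ)) (j : ℕ) : Set ℝ := {t | (t, j) ∈ dom}

/-- Solutions of a hybrid system: absolutely continuous (encoded via an integrable
a.e. selection of the flow map) along flows, and satisfying the jump conditions. -/
def IsSolution [NormedAddCommGroup X] [NormedSpace ℝ X] (H : System X) (x : Arc X) : Prop :=
  x.val (0,0) ∈ H.C ∪ H.D ∧
  (∀ j : ℕ, ∃ v : ℝ → X,
    (∀ᵐ t ∂(volume.restrict (slice x.dom j)),
      x.val (t, j) ∈ H.C ∧ v t ∈ H.F (x.val (t, j))) ∧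
    (∀ t ∈ slice x.dom j, ∀ t' ∈ slice x.dom j,
      IntervalIntegrable v volume t' t ∧
      x.val (t, j) - x.val (t', j) = ∫ s in t'..t, v s)) ∧
  (∀ (t : ℝ) (j : ℕ), (t, j) ∈ x.dom → (t, j+1) ∈ x.dom →
    x.val (t, j) ∈ H.D ∧ x.val (t, j+1) ∈ H.G (x.val (t, j)))

/-- Maximal solutions. -/
def IsMaximal [NormedAddCommGroup X] [NormedSpace ℝ X] (H : System X) (x : Arc X) : Prop :=
  IsSolution H x ∧ ∀ ψ : Arc X, IsSolution H ψ → x.dom ⊆ ψ.dom →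
    (∀ p ∈ x.dom, ψ.val p = x.val p) → ψ.dom ⊆ x.dom

/-- Complete solutions: unbounded hybrid time domain. -/
def Complete (x : Arc X) : Prop := ∀ m : ℝ, ∃ p ∈ x.dom, m < p.1 + (p.2 : ℝ)

/-- Bounded solutions: bounded range. -/
def BoundedArc [Bornology X] (x : Arc X) : Prop := Bornology.IsBounded (x.val '' x.dom)

/-- Class-KL functions. -/
def ClassKL (β : ℝ → ℝ → ℝ) : Prop :=
  (∀ r s, 0 ≤ r → 0 ≤ s → 0 ≤ β r s) ∧
  (∀ s, 0 ≤ s → MonotoneOn (fun r => β r s) (Ici 0)) ∧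
  (∀ r, 0 ≤ r → AntitoneOn (fun s => β r s) (Ici 0)) ∧
  (∀ s, 0 ≤ s → Tendsto (fun r => β r s) (𝓝[>] 0) (𝓝 0)) ∧
  (∀ r, 0 ≤ r → Tendsto (fun s => β r s) atTop (𝓝 0))

/-- Class-K∞ functions. -/
def ClassKInf (α : ℝ → ℝ) : Prop :=
  ContinuousOn α (Ici 0) ∧ α 0 = 0 ∧ StrictMonoOn α (Ici 0) ∧ Tendsto α atTop atTop

/-- Uniform global asymptotic stability of a set `A`. -/
def UGAS [NormedAddCommGroup X] [NormedSpace ℝ X] (H : System X) (A : Set X) : Prop :=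
  ∃ β, ClassKL β ∧ ∀ x : Arc X, IsMaximal H x → ∀ p ∈ x.dom,
    infDist (x.val p) A ≤ β (infDist (x.val (0,0)) A) (p.1 + (p.2 : ℝ))

/-- Uniform global exponential stability of a set `A`. -/
def UGES [NormedAddCommGroup X] [NormedSpace ℝ X] (H : System X) (A : Set X) : Prop :=
  ∃ c₁ c₂ : ℝ, 0 < c₁ ∧ 0 < c₂ ∧ ∀ x : Arc X, IsMaximal H x → ∀ p ∈ x.dom,
    infDist (x.val p) A ≤ c₁ * infDist (x.val (0,0)) A * Real.exp (-(c₂ * (p.1 + (p.2 : ℝ))))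

/-- The KL-plus-offset bound on all maximal solutions starting in `S`. -/
def SolBound [NormedAddCommGroup X] [NormedSpace ℝ X]
    (H : System X) (A : Set X) (β : ℝ → ℝ → ℝ) (ν : ℝ) (S : Set X) : Prop :=
  ∀ x : Arc X, IsMaximal H x → x.val (0,0) ∈ S → ∀ p ∈ x.dom,
    infDist (x.val p) A ≤ β (infDist (x.val (0,0)) A) (p.1 + (p.2 : ℝ)) + ν

/-- SGPAS as `ε → 0⁺` for a one-parameter family of hybrid systems. -/
def SGPAS1 [NormedAddCommGroup X] [NormedSpace ℝ X]
    (H : ℝ → System X) (A : Set X) : Prop :=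
  ∃ β, ClassKL β ∧ ∀ Δ ν : ℝ, 0 < ν → ν < Δ →
    ∃ e1 > (0:ℝ), ∀ ε1 ∈ Ioo (0:ℝ) e1,
      SolBound (H ε1) A β ν {z | infDist z A ≤ Δ}

/-- SGPAS as `(ε₁, ε₂, ε₃) → 0⁺` (parameters tuned sequentially). -/
def SGPAS3 [NormedAddCommGroup X] [NormedSpace ℝ X]
    (H : ℝ → ℝ → ℝ → System X) (A : Set X) : Prop :=
  ∃ β, ClassKL β ∧ ∀ Δ ν : ℝ, 0 < ν → ν < Δ →
    ∃ e1 > (0:ℝ), ∀ ε1 ∈ Ioo (0:ℝ) e1,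
    ∃ e2 > (0:ℝ), ∀ ε2 ∈ Ioo (0:ℝ) e2,
    ∃ e3 > (0:ℝ), ∀ ε3 ∈ Ioo (0:ℝ) e3,
      SolBound (H ε1 ε2 ε3) A β ν {z | infDist z A ≤ Δ}

/-- SGPAS as `(ε₁, ε₂, ε₃, ε₄) → 0⁺` (parameters tuned sequentially). -/
def SGPAS4 [NormedAddCommGroup X] [NormedSpace ℝ X]
    (H : ℝ → ℝ → ℝ → ℝ → System X) (A : Set X) : Prop :=
  ∃ β, ClassKL β ∧ ∀ Δ ν : ℝ, 0 < ν → ν < Δ →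
    ∃ e1 > (0:ℝ), ∀ ε1 ∈ Ioo (0:ℝ) e1,
    ∃ e2 > (0:ℝ), ∀ ε2 ∈ Ioo (0:ℝ) e2,
    ∃ e3 > (0:ℝ), ∀ ε3 ∈ Ioo (0:ℝ) e3,
    ∃ e4 > (0:ℝ), ∀ ε4 ∈ Ioo (0:ℝ) e4,
      SolBound (H ε1 ε2 ε3 ε4) A β ν {z | infDist z A ≤ Δ}

/-- SGPAS as `(ε₁, ..., ε₅) → 0⁺` (parameters tuned sequentially). -/
def SGPAS5 [NormedAddCommGroup X] [NormedSpace ℝ X]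
    (H : ℝ → ℝ → ℝ → ℝ → ℝ → System X) (A : Set X) : Prop :=
  ∃ β, ClassKL β ∧ ∀ Δ ν : ℝ, 0 < ν → ν < Δ →
    ∃ e1 > (0:ℝ), ∀ ε1 ∈ Ioo (0:ℝ) e1,
    ∃ e2 > (0:ℝ), ∀ ε2 ∈ Ioo (0:ℝ) e2,
    ∃ e3 > (0:ℝ), ∀ ε3 ∈ Ioo (0:ℝ) e3,
    ∃ e4 > (0:ℝ), ∀ ε4 ∈ Ioo (0:ℝ) e4,
    ∃ e5 > (0:ℝ), ∀ ε5 ∈ Ioo (0:ℝ) e5,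
      SolBound (H ε1 ε2 ε3 ε4 ε5) A β ν {z | infDist z A ≤ Δ}

/-- Global practical asymptotic stability as `(ε₁, ε₂, ε₃, ε₄) → 0⁺`:
no restriction on the initial condition. -/
def GPAS4 [NormedAddCommGroup X] [NormedSpace ℝ X]
    (H : ℝ → ℝ → ℝ → ℝ → System X) (A : Set X) : Prop :=
  ∃ β, ClassKL β ∧ ∀ ν : ℝ, 0 < ν →
    ∃ e1 > (0:ℝ), ∀ ε1 ∈ Ioo (0:ℝ) e1,
    ∃ e2 > (0:ℝ), ∀ ε2 ∈ Ioo (0:ℝ) e2,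
    ∃ e3 > (0:ℝ), ∀ ε3 ∈ Ioo (0:ℝ) e3,
    ∃ e4 > (0:ℝ), ∀ ε4 ∈ Ioo (0:ℝ) e4,
      SolBound (H ε1 ε2 ε3 ε4) A β ν univ

/-- `(τ, ε)`-closeness of two hybrid arcs. -/
def Close [PseudoMetricSpace X] (τ ε : ℝ) (x y : Arc X) : Prop :=
  (∀ (t : ℝ) (j : ℕ), (t, j) ∈ x.dom → t + (j : ℝ) ≤ τ →
    ∃ s : ℝ, 0 ≤ s ∧ (s, j) ∈ y.dom ∧ |t - s| ≤ ε ∧ dist (x.val (t, j)) (y.val (s, j)) < ε) ∧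
  (∀ (t : ℝ) (j : ℕ), (t, j) ∈ y.dom → t + (j : ℝ) ≤ τ →
    ∃ s : ℝ, 0 ≤ s ∧ (s, j) ∈ x.dom ∧ |t - s| ≤ ε ∧ dist (y.val (t, j)) (x.val (s, j)) < ε)

/-- The `ρ`-inflation of a hybrid system, with inflation profile `σ`. -/
def inflate [NormedAddCommGroup X] [NormedSpace ℝ X] (H : System X) (σ : X → ℝ) (ρ : ℝ) :
    System X where
  C := {x | (closedBall x (ρ * σ x) ∩ H.C).Nonempty}
  F := fun x => {v | ∃ w ∈ closure (convexHull ℝ (⋃ y ∈ closedBall x (ρ * σ x) ∩ H.C, H.F y)),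
      ‖v - w‖ ≤ ρ * σ x}
  D := {x | (closedBall x (ρ * σ x) ∩ H.D).Nonempty}
  G := fun x => {v | ∃ y ∈ closedBall x (ρ * σ x) ∩ H.D, ∃ g ∈ H.G y, ‖v - g‖ ≤ ρ * σ g}

/-- Extraction of the `û`-component (first `n` coordinates of `x_{u,z} ∈ ℝ^{n+r}`). -/
def uhat (n r : ℕ) (x : E (n+r)) : E n := WithLp.toLp 2 (fun i => x (Fin.castAdd r i))

/-- Extraction of the `ẑ`-component (last `r` coordinates of `x_{u,z} ∈ ℝ^{n+r}`). -/
def zhat (n r : ℕ) (x : E (n+r)) : E r := WithLp.toLp 2 (fun i => x (Fin.natAdd n i))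

/-- The matrix `𝔻` extracting the odd-indexed entries of `μ ∈ ℝ^{2n}`. -/
def Dmat (n : ℕ) (μ : E (2*n)) : E n := WithLp.toLp 2 (fun i => μ ⟨2 * i.1, by have := i.2; omega⟩)

/-- The torus `𝕊^n ⊆ ℝ^{2n}`: product of `n` unit circles. -/
def Sph (n : ℕ) : Set (E (2*n)) :=
  {μ | ∀ i : Fin n,
    (μ ⟨2*i.1, by have := i.2; omega⟩)^2 + (μ ⟨2*i.1+1, by have := i.2; omega⟩)^2 = 1}

/-- The block-diagonal oscillator matrix `Φ(ω)` acting on `μ ∈ ℝ^{2n}`, with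
`ω_i = κ_i / ε_ω` and 2×2 blocks `ω_i R₀`, `R₀ = [[0,1],[-1,0]]`. -/
def Phi (n : ℕ) (κ : Fin n → ℚ) (εω : ℝ) (μ : E (2*n)) : E (2*n) :=
  WithLp.toLp 2 (fun j => if h : j.1 % 2 = 0 then
      ((κ ⟨j.1/2, by have := j.2; omega⟩ : ℝ) / εω) * μ ⟨j.1+1, by have := j.2; omega⟩
    else
      -(((κ ⟨j.1/2, by have := j.2; omega⟩ : ℝ) / εω) * μ ⟨j.1-1, by have := j.2; omega⟩))

/-- The set `A := 𝒪 × Ψ` viewed inside `ℝ^{n+r}`. -/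
def setA (n r : ℕ) (O : Set (E n)) (Ψ : Set (E r)) : Set (E (n+r)) :=
  {x | uhat n r x ∈ O ∧ zhat n r x ∈ Ψ}

/-- Solutions of the constrained differential inclusion `u̇ ∈ F(u)`, `u ∈ C`,
on `[0,T]` (absolute continuity encoded via an integrable a.e. selection). -/
def IsDISol {n : ℕ} (F : E n → Set (E n)) (C : Set (E n)) (T : ℝ) (x : ℝ → E n) : Prop :=
  x 0 ∈ C ∧ ∃ v : ℝ → E n, IntervalIntegrable v volume 0 T ∧
    (∀ᵐ t ∂(volume.restrict (Icc (0:ℝ) T)), x t ∈ C ∧ v t ∈ F (x t)) ∧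
    ∀ t ∈ Icc (0:ℝ) T, x t = x 0 + ∫ s in (0:ℝ)..t, v s

/-- UGAS of a compact set `O` for a constrained differential inclusion. -/
def DI_UGAS {n : ℕ} (F : E n → Set (E n)) (C O : Set (E n)) : Prop :=
  ∃ β, ClassKL β ∧ ∀ T, 0 ≤ T → ∀ x : ℝ → E n, IsDISol F C T x →
    ∀ t ∈ Icc (0:ℝ) T, infDist (x t) O ≤ β (infDist (x 0) O) t

/-- The finite mode set `Q = {1, …, q_max}` embedded in `ℝ`. -/
def Qset (qmax : ℕ) : Set ℝ := {q | ∃ k : Fin qmax, q = (k : ℕ) + 1}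

/-- The switching hybrid system with the average dwell-time automaton:
state `(u, q, τ₁)`, flows `u̇ ∈ f_q(u, ∇J(u))`, `q̇ = 0`, `τ̇₁ ∈ [0, η₁]` on
`Û × Q × [0, N₀]`; jumps `u⁺ = u`, `q⁺ ∈ Q∖{q}`, `τ₁⁺ = τ₁ − 1` on `Û × Q × [1, N₀]`. -/
def swADT {n : ℕ} (qmax : ℕ) (f : Fin qmax → E n → E n → Set (E n)) (J : E n → ℝ)
    (Uh : Set (E n)) (N₀ η₁ : ℝ) : System (E n × ℝ × ℝ) where
  C := Uh ×ˢ Qset qmax ×ˢ Icc 0 N₀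
  F := fun z => {v | (∃ k : Fin qmax, z.2.1 = (k : ℕ) + 1 ∧
      v.1 ∈ f k z.1 (gradient J z.1)) ∧ v.2.1 = 0 ∧ v.2.2 ∈ Icc 0 η₁}
  D := Uh ×ˢ Qset qmax ×ˢ Icc 1 N₀
  G := fun z => {v | v.1 = z.1 ∧ v.2.1 ∈ Qset qmax \ {z.2.1} ∧ v.2.2 = z.2.2 - 1}

lemma kl_zero {β : ℝ → ℝ → ℝ} (hβ : ClassKL β) {s : ℝ} (hs : 0 ≤ s) : β 0 s = 0 := by
  obtain ⟨hnn, hmono, hanti, h0, _⟩ := hβ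
  have h00 : β 0 0 ≤ 0 := by
    refine ge_of_tendsto (h0 0 le_rfl) ?_
    filter_upwards [self_mem_nhdsWithin] with r hr
    exact hmono 0 le_rfl (by simp) (mem_Ici.mpr (le_of_lt hr)) (le_of_lt hr)
  have h1 : β 0 s ≤ β 0 0 := hanti 0 le_rfl (by simp) hs hs
  have h2 : 0 ≤ β 0 s := hnn 0 s le_rfl hs
  linarith

/-- The "inflation" map `r ↦ max r (β r 0)`. -/
def Gh (β : ℝ → ℝ → ℝ) : ℝ → ℝ := fun r => max r (β r 0)

lemma le_Gh (β : ℝ → ℝ → ℝ) (r : ℝ) : r ≤ Gh β r := le_max_left _ _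

lemma Gh_mono {β : ℝ → ℝ → ℝ} (hβ : ClassKL β) : MonotoneOn (Gh β) (Ici 0) := by
  intro r hr r' hr' h
  exact max_le_max h (hβ.2.1 0 le_rfl hr hr' h)

lemma beta_le_Gh {β : ℝ → ℝ → ℝ} (hβ : ClassKL β) {r s : ℝ} (hr : 0 ≤ r) (hs : 0 ≤ s) :
    β r s ≤ Gh β r :=
  le_trans (hβ.2.2.1 r hr (by simp) hs hs) (le_max_right _ _)

lemma le_iterGh (β : ℝ → ℝ → ℝ) (n : ℕ) (r : ℝ) : r ≤ (Gh β)^[n] r := by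
  induction n with
  | zero => simp
  | succ n ih =>
    rw [Function.iterate_succ_apply']
    exact le_trans ih (le_Gh _ _)

lemma iterGh_nonneg (β : ℝ → ℝ → ℝ) (n : ℕ) {r : ℝ} (hr : 0 ≤ r) : 0 ≤ (Gh β)^[n] r :=
  le_trans hr (le_iterGh _ _ _)

lemma iterGh_mono {β : ℝ → ℝ → ℝ} (hβ : ClassKL β) (n : ℕ) :
    MonotoneOn ((Gh β)^[n]) (Ici 0) := by
  induction n with
  | zero => intro r hr r' hr' h; simpa using h
  | succ n ih =>
    intro r hr r' hr' h
    rw [Function.iterate_succ_apply', Function.iterate_succ_apply']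
    exact Gh_mono hβ (iterGh_nonneg β n hr) (iterGh_nonneg β n hr') (ih hr hr' h)

lemma iterGh_le_iterGh {β : ℝ → ℝ → ℝ} {n m : ℕ} (h : n ≤ m) {r : ℝ} :
    (Gh β)^[n] r ≤ (Gh β)^[m] r := by
  induction m, h using Nat.le_induction with
  | base => exact le_refl _
  | succ m hm ih =>
    rw [Function.iterate_succ_apply']
    exact le_trans ih (le_Gh _ _)

lemma Gh_small {β : ℝ → ℝ → ℝ} (hβ : ClassKL β) :
    ∀ ε > (0:ℝ), ∃ ρ > (0:ℝ), ∀ r, 0 ≤ r → r ≤ ρ → Gh β r ≤ ε := by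
  intro ε hε
  obtain ⟨d, hd, hball⟩ := (Metric.tendsto_nhdsWithin_nhds.mp (hβ.2.2.2.1 0 le_rfl)) ε hε
  refine ⟨min (d/2) ε, by positivity, fun r hr hrle => ?_⟩
  rcases eq_or_lt_of_le hr with h0 | h0
  · rw [Gh, ← h0, kl_zero hβ le_rfl]; simp [le_of_lt hε]
  · have hb : β r 0 ≤ ε := by
      have := hball h0 (by
        rw [Real.dist_eq, sub_zero, abs_of_nonneg hr]
        exact lt_of_le_of_lt (le_trans hrle (min_le_left _ _)) (by linarith))
      rw [Real.dist_eq, sub_zero] at this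
      exact le_of_lt (lt_of_le_of_lt (le_abs_self _) this)
    exact max_le (le_trans hrle (min_le_right _ _)) hb

lemma iterGh_small {β : ℝ → ℝ → ℝ} (hβ : ClassKL β) (n : ℕ) :
    ∀ ε > (0:ℝ), ∃ ρ > (0:ℝ), ∀ r, 0 ≤ r → r ≤ ρ → (Gh β)^[n] r ≤ ε := by
  induction n with
  | zero => intro ε hε; exact ⟨ε, hε, fun r _ h => by simpa using h⟩
  | succ n ih =>
    intro ε hε
    obtain ⟨ρ₁, hρ₁, h₁⟩ := Gh_small hβ ε hε
    obtain ⟨ρ, hρ, h⟩ := ih ρ₁ hρ₁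
    refine ⟨ρ, hρ, fun r hr hrle => ?_⟩
    rw [Function.iterate_succ_apply']
    exact h₁ _ (iterGh_nonneg β n hr) (h r hr hrle)


theorem key
    {β : ℝ → ℝ → ℝ} (hβ : ClassKL β)
    {N₀ : ℝ} (hN₀ : 1 ≤ N₀) {K : ℕ} (hK : 2*N₀ + 1 ≤ (K:ℝ))
    {Δ ν ν' δ η₁ : ℝ} (hν : 0 < ν) (hν' : 0 < ν') (hν'Δ : ν' ≤ Δ)
    (hν'ν : (Gh β)^[K+1] ν' ≤ ν) (hδpos : 0 < δ)
    (hδ : β ((Gh β)^[K] Δ) δ ≤ ν')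
    (hη : 0 < η₁) (hηδ : η₁ * δ ≤ 1/2)
    {j : ℕ} {ts : ℕ → ℝ} {a : ℕ → ℝ} {t afin : ℝ}
    (hts0 : ts 0 = 0) (hmono : ∀ i < j, ts i ≤ ts (i+1)) (hlast : ts j ≤ t)
    (hannoneg : ∀ i, 0 ≤ a i) (haΔ : a 0 ≤ Δ) (hafin : 0 ≤ afin)
    (hstep : ∀ i < j, a (i+1) ≤ β (a i) (ts (i+1) - ts i))
    (hfin : afin ≤ β (a j) (t - ts j))
    (hbudget : ∀ i' i, i' ≤ i → i ≤ j → (i:ℝ) - (i':ℝ) ≤ N₀ + η₁ * (ts i - ts i')) :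
    afin ≤ (Gh β)^[K+1] (β ((Gh β)^[K] (a 0)) (max 0 ((t + j - K)/(K+1)))) + ν := by
  classical
  have hnn := hβ.1
  have hanti' : ∀ r s s', 0 ≤ r → 0 ≤ s → s ≤ s' → β r s' ≤ β r s :=
    fun r s s' hr hs hss => hβ.2.2.1 r hr hs (le_trans hs hss) hss
  have hmon' : ∀ s r r', 0 ≤ s → 0 ≤ r → r ≤ r' → β r s ≤ β r' s :=
    fun s r r' hs hr hrr => hβ.2.1 s hs hr (le_trans hr hrr) hrr
  have hΔ0 : (0:ℝ) ≤ Δ := le_trans (le_of_lt hν') hν'Δ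
  have hgap : ∀ i < j, 0 ≤ ts (i+1) - ts i := fun i hi => by linarith [hmono i hi]
  have hgapf : 0 ≤ t - ts j := by linarith
  have chain : ∀ i' d, i' + d ≤ j → a (i' + d) ≤ (Gh β)^[d] (a i') := by
    intro i' d
    induction d with
    | zero => intro _; simp
    | succ d ih =>
      intro hle
      have h1 : i' + d < j := by omega
      have h2 : a (i' + d + 1) ≤ Gh β (a (i' + d)) :=
        le_trans (hstep _ h1) (beta_le_Gh hβ (hannoneg _) (hgap _ h1))
      rw [show i' + (d+1) = i' + d + 1 from rfl, Function.iterate_succ_apply']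
      exact le_trans h2 (Gh_mono hβ (hannoneg _)
        (iterGh_nonneg β d (hannoneg i')) (ih (by omega)))
  have sumgap : ∀ i' d, i' + d ≤ j → (∀ l, i' ≤ l → l < i' + d → ts (l+1) - ts l < δ) →
      ts (i' + d) - ts i' ≤ (d:ℝ) * δ := by
    intro i' d
    induction d with
    | zero => intro _ _; simp
    | succ d ih =>
      intro hle hsmall
      have h1 : ts (i' + d + 1) - ts (i' + d) < δ := hsmall _ (by omega) (by omega)
      have h2 := ih (by omega) (fun l h1 h2 => hsmall l h1 (by omega))
      have h3 : i' + (d+1) = i' + d + 1 := rfl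
      rw [h3]
      push_cast
      nlinarith
  have window : ∀ i' d, i' + d ≤ j → (∀ l, i' ≤ l → l < i' + d → ts (l+1) - ts l < δ) →
      (d:ℝ) ≤ 2 * N₀ := by
    intro i' d hle hsmall
    have h1 := hbudget i' (i' + d) (by omega) hle
    have h2 := sumgap i' d hle hsmall
    have h3 : η₁ * (ts (i'+d) - ts i') ≤ (d:ℝ) * (η₁ * δ) := by nlinarith
    have h4 : ((i'+d : ℕ):ℝ) - (i':ℝ) = (d:ℝ) := by push_cast; ring
    rw [h4] at h1
    nlinarith [Nat.cast_nonneg (α := ℝ) d]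
  have windowK : ∀ i' d, i' + d ≤ j → (∀ l, i' ≤ l → l < i' + d → ts (l+1) - ts l < δ) →
      d ≤ K := by
    intro i' d hle hsmall
    have h1 := window i' d hle hsmall
    have h2 : (d:ℝ) ≤ (K:ℝ) := by linarith
    exact_mod_cast h2
  have claim2 : ∀ i, i ≤ j → a i ≤ (Gh β)^[K] Δ := by
    intro i
    induction i using Nat.strong_induction_on with
    | _ i IH =>
      intro hij
      by_cases hg : ∃ l, l < i ∧ δ ≤ ts (l+1) - ts l
      · obtain ⟨l₀, hl₀⟩ := hg
        set P := fun l => l < i ∧ δ ≤ ts (l+1) - ts l with hP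
        set l := Nat.findGreatest P i with hldef
        have hPl : P l := Nat.findGreatest_spec (le_of_lt hl₀.1) hl₀
        have hmax : ∀ k, l < k → k ≤ i → ¬ P k := fun k h1 h2 =>
          Nat.findGreatest_is_greatest h1 h2
        have hli : l < i := hPl.1
        have hgl : 0 ≤ ts (l+1) - ts l := le_trans (le_of_lt hδpos) hPl.2
        have hl1 : a (l+1) ≤ ν' := by
          have h1 : a (l+1) ≤ β (a l) (ts (l+1) - ts l) := hstep l (by omega)
          have h2 : β (a l) (ts (l+1) - ts l) ≤ β (a l) δ :=
            hanti' (a l) δ _ (hannoneg l) (le_of_lt hδpos) hPl.2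
          have h3 : β (a l) δ ≤ β ((Gh β)^[K] Δ) δ :=
            hmon' δ (a l) _ (le_of_lt hδpos) (hannoneg l) (IH l hli (by omega))
          linarith
        have hd : (l+1) + (i - (l+1)) = i := by omega
        have h5 : a i ≤ (Gh β)^[i - (l+1)] (a (l+1)) := by
          have := chain (l+1) (i - (l+1)) (by omega)
          rwa [hd] at this
        have h6 : (Gh β)^[i - (l+1)] (a (l+1)) ≤ (Gh β)^[i - (l+1)] ν' :=
          iterGh_mono hβ _ (hannoneg _) (le_of_lt hν') hl1
        have hdK : i - (l+1) ≤ K := by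
          refine windowK (l+1) (i - (l+1)) (by omega) ?_
          intro l' h1 h2
          by_contra hcon
          exact hmax l' (by omega) (by omega) ⟨by omega, by linarith⟩
        have h7 : (Gh β)^[i - (l+1)] ν' ≤ (Gh β)^[K] ν' := iterGh_le_iterGh hdK
        have h8 : (Gh β)^[K] ν' ≤ (Gh β)^[K] Δ :=
          iterGh_mono hβ K (le_of_lt hν') hΔ0 hν'Δ
        linarith
      · push_neg at hg
        have hiK : i ≤ K := windowK 0 i (by omega) (fun l _ h2 => hg l (by omega))
        have h1 : a i ≤ (Gh β)^[i] (a 0) := by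
          have := chain 0 i (by omega); simpa using this
        have h2 : (Gh β)^[i] (a 0) ≤ (Gh β)^[i] Δ := iterGh_mono hβ i (hannoneg 0) hΔ0 haΔ
        have h3 : (Gh β)^[i] Δ ≤ (Gh β)^[K] Δ := iterGh_le_iterGh hiK
        linarith
  set mstar := max 0 ((t + j - K)/(K+1)) with hmstar
  have hmstar0 : 0 ≤ mstar := le_max_left _ _
  have hRHSnn : 0 ≤ (Gh β)^[K+1] (β ((Gh β)^[K] (a 0)) mstar) :=
    iterGh_nonneg β (K+1) (hnn _ _ (iterGh_nonneg β K (hannoneg 0)) hmstar0)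
  by_cases hbig : (∃ l, l < j ∧ δ ≤ ts (l+1) - ts l) ∨ δ ≤ t - ts j
  · have hafν : afin ≤ ν := by
      rcases hbig with ⟨l₀, hl₀⟩ | hf
      · set P := fun l => l < j ∧ δ ≤ ts (l+1) - ts l with hP
        set l := Nat.findGreatest P j with hldef
        have hPl : P l := Nat.findGreatest_spec (le_of_lt hl₀.1) hl₀
        have hmax : ∀ k, l < k → k ≤ j → ¬ P k := fun k h1 h2 =>
          Nat.findGreatest_is_greatest h1 h2
        have hlj : l < j := hPl.1
        have hl1 : a (l+1) ≤ ν' := by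
          have h1 : a (l+1) ≤ β (a l) (ts (l+1) - ts l) := hstep l hlj
          have h2 : β (a l) (ts (l+1) - ts l) ≤ β (a l) δ :=
            hanti' (a l) δ _ (hannoneg l) (le_of_lt hδpos) hPl.2
          have h3 : β (a l) δ ≤ β ((Gh β)^[K] Δ) δ :=
            hmon' δ (a l) _ (le_of_lt hδpos) (hannoneg l) (claim2 l (by omega))
          linarith
        have hd : (l+1) + (j - (l+1)) = j := by omega
        have h5 : a j ≤ (Gh β)^[j - (l+1)] (a (l+1)) := by
          have := chain (l+1) (j - (l+1)) (by omega)
          rwa [hd] at this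
        have hdK : j - (l+1) ≤ K := by
          refine windowK (l+1) (j - (l+1)) (by omega) ?_
          intro l' h1 h2
          by_contra hcon
          exact hmax l' (by omega) (by omega) ⟨by omega, by linarith⟩
        have h6 : a j ≤ (Gh β)^[K] ν' := by
          calc a j ≤ (Gh β)^[j - (l+1)] (a (l+1)) := h5
          _ ≤ (Gh β)^[j - (l+1)] ν' := iterGh_mono hβ _ (hannoneg _) (le_of_lt hν') hl1
          _ ≤ (Gh β)^[K] ν' := iterGh_le_iterGh hdK
        have h7 : afin ≤ Gh β (a j) := by
          calc afin ≤ β (a j) (t - ts j) := hfin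
          _ ≤ β (a j) 0 := hanti' (a j) 0 _ (hannoneg j) le_rfl hgapf
          _ ≤ Gh β (a j) := le_max_right _ _
        have h8 : Gh β (a j) ≤ Gh β ((Gh β)^[K] ν') :=
          Gh_mono hβ (hannoneg j) (iterGh_nonneg β K (le_of_lt hν')) h6
        have h9 : Gh β ((Gh β)^[K] ν') = (Gh β)^[K+1] ν' :=
          (Function.iterate_succ_apply' _ _ _).symm
        linarith
      · have h1 : afin ≤ β (a j) δ :=
          le_trans hfin (hanti' (a j) δ _ (hannoneg j) (le_of_lt hδpos) hf)
        have h2 : β (a j) δ ≤ β ((Gh β)^[K] Δ) δ :=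
          hmon' δ (a j) _ (le_of_lt hδpos) (hannoneg j) (claim2 j le_rfl)
        have h3 : ν' ≤ (Gh β)^[K+1] ν' := le_iterGh β (K+1) ν'
        linarith
    linarith
  · push_neg at hbig
    obtain ⟨hsmall, hfsmall⟩ := hbig
    have hjK : j ≤ K := windowK 0 j (by omega) (fun l _ h2 => hsmall l (by omega))
    have hchain0 : ∀ i, i ≤ j → a i ≤ (Gh β)^[K] (a 0) := by
      intro i hi
      calc a i ≤ (Gh β)^[i] (a 0) := by have := chain 0 i (by omega); simpa using this
      _ ≤ (Gh β)^[K] (a 0) := iterGh_le_iterGh (le_trans hi hjK)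
    by_cases hseg : (∃ l, l < j ∧ mstar ≤ ts (l+1) - ts l) ∨ mstar ≤ t - ts j
    · have key2 : afin ≤ (Gh β)^[K+1] (β ((Gh β)^[K] (a 0)) mstar) := by
        rcases hseg with ⟨l, hlj, hlg⟩ | hfg
        · have h1 : a (l+1) ≤ β ((Gh β)^[K] (a 0)) mstar := by
            calc a (l+1) ≤ β (a l) (ts (l+1) - ts l) := hstep l hlj
            _ ≤ β (a l) mstar := hanti' (a l) mstar _ (hannoneg l) hmstar0 hlg
            _ ≤ β ((Gh β)^[K] (a 0)) mstar :=
                hmon' mstar (a l) _ hmstar0 (hannoneg l) (hchain0 l (by omega))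
          have hd : (l+1) + (j - (l+1)) = j := by omega
          have h2 : a j ≤ (Gh β)^[j - (l+1)] (a (l+1)) := by
            have := chain (l+1) (j - (l+1)) (by omega)
            rwa [hd] at this
          have h3 : a j ≤ (Gh β)^[j - (l+1)] (β ((Gh β)^[K] (a 0)) mstar) :=
            le_trans h2 (iterGh_mono hβ _ (hannoneg _)
              (hnn _ _ (iterGh_nonneg β K (hannoneg 0)) hmstar0) h1)
          have h4 : afin ≤ Gh β (a j) := by
            calc afin ≤ β (a j) (t - ts j) := hfin
            _ ≤ β (a j) 0 := hanti' (a j) 0 _ (hannoneg j) le_rfl hgapf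
            _ ≤ Gh β (a j) := le_max_right _ _
          have h5 : Gh β (a j) ≤ Gh β ((Gh β)^[j - (l+1)] (β ((Gh β)^[K] (a 0)) mstar)) :=
            Gh_mono hβ (hannoneg j)
              (iterGh_nonneg β _ (hnn _ _ (iterGh_nonneg β K (hannoneg 0)) hmstar0)) h3
          have h6 : Gh β ((Gh β)^[j - (l+1)] (β ((Gh β)^[K] (a 0)) mstar)) =
              (Gh β)^[(j - (l+1)) + 1] (β ((Gh β)^[K] (a 0)) mstar) :=
            (Function.iterate_succ_apply' _ _ _).symm
          have h7 : (Gh β)^[(j - (l+1)) + 1] (β ((Gh β)^[K] (a 0)) mstar) ≤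
              (Gh β)^[K+1] (β ((Gh β)^[K] (a 0)) mstar) :=
            iterGh_le_iterGh (by omega)
          linarith
        · calc afin ≤ β (a j) (t - ts j) := hfin
          _ ≤ β (a j) mstar := hanti' (a j) mstar _ (hannoneg j) hmstar0 hfg
          _ ≤ β ((Gh β)^[K] (a 0)) mstar :=
              hmon' mstar (a j) _ hmstar0 (hannoneg j) (hchain0 j le_rfl)
          _ ≤ (Gh β)^[K+1] (β ((Gh β)^[K] (a 0)) mstar) := le_iterGh β (K+1) _
      linarith
    · exfalso
      push_neg at hseg
      obtain ⟨hseg1, hseg2⟩ := hseg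
      have hm0 : 0 < mstar := lt_of_le_of_lt hgapf hseg2
      have hmval : mstar ≤ (t + j - K)/(K+1) := by
        rcases max_cases (0:ℝ) ((t + j - K)/(K+1)) with ⟨h1, h2⟩ | ⟨h1, h2⟩
        · rw [hmstar, h1] at hm0; exact absurd hm0 (lt_irrefl 0)
        · rw [hmstar, h1]
      have hsum : ∀ d, d ≤ j → ts d - ts 0 ≤ (d:ℝ) * mstar := by
        intro d
        induction d with
        | zero => intro _; simp
        | succ d ih =>
          intro hle
          have h1 : ts (d+1) - ts d < mstar := hseg1 d (by omega)
          have h2 := ih (by omega)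
          push_cast
          nlinarith
      have h1 : t - ts 0 < ((j:ℝ) + 1) * mstar := by
        have hb := hsum j le_rfl
        have hr : ((j:ℝ) + 1) * mstar = (j:ℝ) * mstar + mstar := by ring
        linarith
      have h2 : ((j:ℝ)+1) * mstar ≤ ((K:ℝ)+1) * mstar := by
        have hx : (j:ℝ) ≤ (K:ℝ) := by exact_mod_cast hjK
        exact mul_le_mul_of_nonneg_right (by linarith) hm0.le
      have h3 : ((K:ℝ)+1) * mstar ≤ t + j - K := by
        have hKpos : (0:ℝ) < (K:ℝ)+1 := by positivity
        calc ((K:ℝ)+1) * mstar ≤ ((K:ℝ)+1) * ((t + j - K)/(K+1)) :=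
              mul_le_mul_of_nonneg_left hmval hKpos.le
        _ = t + j - K := by field_simp
      have h4 : t + (j:ℝ) - K ≤ t := by
        have hx : (j:ℝ) ≤ (K:ℝ) := by exact_mod_cast hjK
        linarith
      rw [hts0] at h1
      linarith



section Helpers

lemma qset_eq (qmax : ℕ) : Qset qmax = Set.range (fun k : Fin qmax => ((k:ℕ):ℝ) + 1) := by
  ext q
  simp only [Qset, mem_setOf_eq, Set.mem_range]
  constructor
  · rintro ⟨k, hk⟩; exact ⟨k, hk.symm⟩
  · rintro ⟨k, hk⟩; exact ⟨k, hk.symm⟩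

lemma qset_finite (qmax : ℕ) : (Qset qmax).Finite := by
  rw [qset_eq]; exact Set.finite_range _

lemma infDist_prod_eq {n qmax : ℕ} {O : Set (E n)} {N₀ : ℝ}
    (hOcp : IsCompact O) (hOne : O.Nonempty) (hq : 0 < qmax) (hN₀ : 0 ≤ N₀)
    {z : E n × ℝ × ℝ} (hz2 : z.2.1 ∈ Qset qmax) (hz3 : z.2.2 ∈ Icc 0 N₀) :
    infDist z (O ×ˢ Qset qmax ×ˢ Icc 0 N₀) = infDist z.1 O := by
  have hA : IsCompact (O ×ˢ Qset qmax ×ˢ Icc (0:ℝ) N₀) :=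
    hOcp.prod (((qset_finite qmax).isCompact).prod isCompact_Icc)
  have hAne : (O ×ˢ Qset qmax ×ˢ Icc (0:ℝ) N₀).Nonempty := by
    obtain ⟨o, ho⟩ := hOne
    exact ⟨(o, z.2.1, z.2.2), ho, hz2, hz3⟩
  apply le_antisymm
  · obtain ⟨o, ho, hoeq⟩ := hOcp.exists_infDist_eq_dist hOne z.1
    rw [hoeq]
    have hmem : (o, z.2.1, z.2.2) ∈ O ×ˢ Qset qmax ×ˢ Icc (0:ℝ) N₀ := ⟨ho, hz2, hz3⟩
    refine le_trans (infDist_le_dist_of_mem hmem) (le_of_eq ?_)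
    rw [Prod.dist_eq]
    have : dist z.2 (z.2.1, z.2.2) = 0 := by simp
    rw [this]
    exact max_eq_left dist_nonneg
  · obtain ⟨w, hw, hweq⟩ := hA.exists_infDist_eq_dist hAne z
    rw [hweq]
    calc infDist z.1 O ≤ dist z.1 w.1 := infDist_le_dist_of_mem hw.1
    _ ≤ dist z w := by rw [Prod.dist_eq]; exact le_max_left _ _

/-- A path through a hybrid time domain to a given point. -/
lemma htd_path {D : Set (ℝ × ℕ)} (hD : IsHTD D) {t : ℝ} {j : ℕ} (h : (t, j) ∈ D) :
    ∃ ts : ℕ → ℝ, ts 0 = 0 ∧ (∀ i < j, ts i ≤ ts (i+1)) ∧ ts j ≤ t ∧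
      (∀ i < j, ∀ τ ∈ Icc (ts i) (ts (i+1)), (τ, i) ∈ D) ∧
      (∀ τ ∈ Icc (ts j) t, (τ, j) ∈ D) := by
  obtain ⟨Ek, hEk, hmono, hE⟩ := hD
  rw [hE] at h
  obtain ⟨k, hk⟩ := mem_iUnion.mp h
  have hsub : Ek k ⊆ D := by rw [hE]; exact subset_iUnion _ k
  obtain ⟨J, u, hu0, humono, hEq⟩ := hEk k
  rw [hEq] at hk
  simp only [mem_iUnion, Finset.mem_range, mem_prod, mem_Icc, mem_singleton_iff] at hk
  obtain ⟨i, hiJ, ⟨hti1, hti2⟩, hji⟩ := hk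
  subst hji
  refine ⟨u, hu0, fun i' hi' => humono i' (by omega), hti1, ?_, ?_⟩
  · intro i' hi' τ hτ
    apply hsub
    rw [hEq]
    simp only [mem_iUnion, Finset.mem_range, mem_prod, mem_Icc, mem_singleton_iff]
    exact ⟨i', by omega, hτ, rfl⟩
  · intro τ hτ
    apply hsub
    rw [hEq]
    simp only [mem_iUnion, Finset.mem_range, mem_prod, mem_Icc, mem_singleton_iff]
    exact ⟨j, hiJ, ⟨hτ.1, le_trans hτ.2 hti2⟩, rfl⟩

lemma slice_ordConnected {D : Set (ℝ × ℕ)} (hD : IsHTD D) (j : ℕ) :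
    OrdConnected (slice D j) := by
  obtain ⟨Ek, hEk, hmono, hE⟩ := hD
  constructor
  intro s hs t ht z hz
  rw [hE] at hs ht ⊢
  have hs' := mem_iUnion.mp hs
  have ht' := mem_iUnion.mp ht
  obtain ⟨k1, hk1⟩ := hs'
  obtain ⟨k2, hk2⟩ := ht'
  have hk1' : (s, j) ∈ Ek (max k1 k2) := hmono (le_max_left k1 k2) hk1
  have hk2' : (t, j) ∈ Ek (max k1 k2) := hmono (le_max_right k1 k2) hk2
  apply mem_iUnion.mpr
  refine ⟨max k1 k2, ?_⟩
  obtain ⟨J, u, hu0, humono, hEq⟩ := hEk (max k1 k2)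
  rw [hEq] at hk1' hk2' ⊢
  simp only [mem_iUnion, Finset.mem_range, mem_prod, mem_Icc, mem_singleton_iff] at hk1' hk2' ⊢
  obtain ⟨i1, hi1J, ⟨h11, h12⟩, hj1⟩ := hk1'
  obtain ⟨i2, hi2J, ⟨h21, h22⟩, hj2⟩ := hk2'
  subst hj1; subst hj2
  exact ⟨j, hi2J, ⟨le_trans h11 hz.1, le_trans hz.2 h22⟩, rfl⟩

lemma slice_measurable {D : Set (ℝ × ℕ)} (hD : IsHTD D) (j : ℕ) :
    MeasurableSet (slice D j) :=
  (slice_ordConnected hD j).measurableSet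

end Helpers

section SolLemmas

variable {n qmax : ℕ} {f : Fin qmax → E n → E n → Set (E n)} {Jf : E n → ℝ}
  {Uh : Set (E n)} {N₀ η₁ : ℝ}

lemma C_closed (hUcl : IsClosed Uh) :
    IsClosed (Uh ×ˢ Qset qmax ×ˢ Icc (0:ℝ) N₀) :=
  hUcl.prod (((qset_finite qmax).isClosed).prod isClosed_Icc)

/-- Every point of the domain of a solution has values in `Û × Q × [0, N₀]`. -/
lemma memC (hUcl : IsClosed Uh)
    {x : Arc (E n × ℝ × ℝ)} (hx : IsSolution (swADT qmax f Jf Uh N₀ η₁) x) :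
    ∀ t (j : ℕ), (t, j) ∈ x.dom → x.val (t, j) ∈ Uh ×ˢ Qset qmax ×ˢ Icc 0 N₀ := by
  intro t j hmem
  obtain ⟨ts, hts0, htsmono, htslast, hpiece, hfinal⟩ := htd_path x.htd hmem
  rcases eq_or_lt_of_le htslast with heq | hlt
  · -- t = ts j : jump or initial point
    rcases Nat.eq_zero_or_pos j with hj0 | hjpos
    · subst hj0
      have ht0 : t = 0 := by rw [← heq, hts0]
      subst ht0
      rcases hx.1 with hC | hD
      · exact hC
      · exact ⟨hD.1, hD.2.1, ⟨le_trans zero_le_one hD.2.2.1, hD.2.2.2⟩⟩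
    · obtain ⟨jj, rfl⟩ : ∃ jj, j = jj + 1 := ⟨j - 1, by omega⟩
      have h1 : (ts (jj+1), jj) ∈ x.dom :=
        hpiece jj (by omega) (ts (jj+1)) ⟨htsmono jj (by omega), le_rfl⟩
      have h2 : (ts (jj+1), jj+1) ∈ x.dom := by rw [heq]; exact hmem
      obtain ⟨hD, hG⟩ := hx.2.2 (ts (jj+1)) jj h1 h2
      rw [← heq]
      obtain ⟨hG1, hG2, hG3⟩ := hG
      refine ⟨by rw [hG1]; exact hD.1, hG2.1, ?_⟩
      rw [hG3]
      have := hD.2.2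
      exact ⟨by linarith [this.1], by linarith [this.2, (show (0:ℝ) ≤ 1 by norm_num)]⟩
  · -- ts j < t : flow; use continuity and a.e. membership
    obtain ⟨v, hae, hint⟩ := hx.2.1 j
    set b := ts j with hb
    have hbs : b ∈ slice x.dom j := hfinal b ⟨le_rfl, le_of_lt hlt⟩
    have hts : t ∈ slice x.dom j := hmem
    have hIcc : ∀ τ ∈ Icc b t, τ ∈ slice x.dom j := fun τ hτ => hfinal τ hτ
    have hxeq : ∀ τ ∈ Icc b t, x.val (τ, j) =
        x.val (b, j) + ∫ s in b..τ, v s := by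
      intro τ hτ
      have h2 := (hint τ (hIcc τ hτ) b hbs).2
      exact sub_eq_iff_eq_add'.mp h2
    have hii : IntervalIntegrable v volume b t := (hint t hts b hbs).1
    have hcont : ContinuousOn (fun τ => x.val (b, j) + ∫ s in b..τ, v s) (Icc b t) := by
      have h3 : ContinuousOn (fun τ => ∫ s in b..τ, v s) (Icc b t) := by
        have := intervalIntegral.continuousOn_primitive_interval'
          (μ := volume) (f := v) (b₁ := b) (b₂ := t) (a := b) hii (by
            rw [uIcc_of_le (le_of_lt hlt)]; exact left_mem_Icc.mpr (le_of_lt hlt))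
        rwa [uIcc_of_le (le_of_lt hlt)] at this
      exact continuousOn_const.add h3
    have hae' := (ae_restrict_iff' (slice_measurable x.htd j)).mp hae
    -- pick good points approaching t
    have hgood : ∀ m : ℕ, ∃ τ, τ ∈ Ioo (max b (t - 1/(m+1))) t ∧
        x.val (τ, j) ∈ Uh ×ˢ Qset qmax ×ˢ Icc (0:ℝ) N₀ := by
      intro m
      by_contra hcon
      push_neg at hcon
      have hzero : ∀ᵐ τ ∂(volume : Measure ℝ), τ ∉ Ioo (max b (t - 1/(m+1))) t := by
        filter_upwards [hae'] with τ hτ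
        intro hmem'
        have hτIcc : τ ∈ Icc b t :=
          ⟨le_trans (le_max_left _ _) (le_of_lt hmem'.1), le_of_lt hmem'.2⟩
        exact hcon τ hmem' (hτ (hIcc τ hτIcc)).1
      have h0 : volume (Ioo (max b (t - 1/(m+1))) t) = 0 :=
        measure_eq_zero_iff_ae_notMem.mpr hzero
      rw [Real.volume_Ioo] at h0
      have hlt2 : max b (t - 1/(m+1)) < t := by
        apply max_lt hlt
        have : (0:ℝ) < 1/(m+1) := by positivity
        linarith
      simp only [ENNReal.ofReal_eq_zero] at h0
      linarith
    choose τs hτs1 hτs2 using hgood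
    have hτmem : ∀ m, τs m ∈ Icc b t := fun m =>
      ⟨le_trans (le_max_left _ _) (le_of_lt (hτs1 m).1), le_of_lt (hτs1 m).2⟩
    have htend : Tendsto τs atTop (𝓝 t) := by
      have hlow : ∀ m : ℕ, t - 1/(m+1) ≤ τs m := fun m =>
        le_of_lt (lt_of_le_of_lt (le_max_right _ _) (hτs1 m).1)
      have hup : ∀ m : ℕ, τs m ≤ t := fun m => le_of_lt (hτs1 m).2
      have h1 : Tendsto (fun m : ℕ => t - 1/((m:ℝ)+1)) atTop (𝓝 t) := by
        have h0 : Tendsto (fun m : ℕ => 1/((m:ℝ)+1)) atTop (𝓝 (0:ℝ)) :=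
          tendsto_one_div_add_atTop_nhds_zero_nat
        have h2 : Tendsto (fun _ : ℕ => t) atTop (𝓝 t) := tendsto_const_nhds
        simpa using h2.sub h0
      exact tendsto_of_tendsto_of_tendsto_of_le_of_le h1 tendsto_const_nhds hlow hup
    have hvt : Tendsto (fun m => x.val (τs m, j)) atTop (𝓝 (x.val (t, j))) := by
      have hteq : ∀ m, x.val (τs m, j) =
          x.val (b, j) + ∫ s in b..(τs m), v s := fun m => hxeq _ (hτmem m)
      have hteq2 : x.val (t, j) = x.val (b, j) + ∫ s in b..t, v s :=
        hxeq t ⟨le_of_lt hlt, le_rfl⟩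
      rw [hteq2]
      have hcw : ContinuousWithinAt (fun τ => x.val (b, j) + ∫ s in b..τ, v s) (Icc b t) t :=
        hcont.continuousWithinAt (right_mem_Icc.mpr (le_of_lt hlt))
      have htend2 : Tendsto τs atTop (𝓝[Icc b t] t) :=
        tendsto_nhdsWithin_of_tendsto_nhds_of_eventually_within τs htend
          (Eventually.of_forall hτmem)
      have := hcw.tendsto.comp htend2
      convert this using 2
      exact hteq _
    exact (C_closed hUcl).mem_of_tendsto hvt (Eventually.of_forall hτs2)

end SolLemmas

section FlowLemmas

variable {n qmax : ℕ} {f : Fin qmax → E n → E n → Set (E n)} {Jf : E n → ℝ}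
  {Uh : Set (E n)} {O : Set (E n)} {N₀ η₁ : ℝ}

/-- Projections. -/
def P1 (n : ℕ) : (E n × ℝ × ℝ) →L[ℝ] E n := ContinuousLinearMap.fst ℝ (E n) (ℝ × ℝ)
def P2 (n : ℕ) : (E n × ℝ × ℝ) →L[ℝ] ℝ :=
  (ContinuousLinearMap.fst ℝ ℝ ℝ).comp (ContinuousLinearMap.snd ℝ (E n) (ℝ × ℝ))
def P3 (n : ℕ) : (E n × ℝ × ℝ) →L[ℝ] ℝ :=
  (ContinuousLinearMap.snd ℝ ℝ ℝ).comp (ContinuousLinearMap.snd ℝ (E n) (ℝ × ℝ))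

lemma P1_apply (z : E n × ℝ × ℝ) : P1 n z = z.1 := rfl
lemma P2_apply (z : E n × ℝ × ℝ) : P2 n z = z.2.1 := rfl
lemma P3_apply (z : E n × ℝ × ℝ) : P3 n z = z.2.2 := rfl

/-- Along one flow interval the distance to `O` obeys one of the mode KL bounds. -/
lemma flow_decay (hUcl : IsClosed Uh) (hq : 0 < qmax)
    (βf : Fin qmax → ℝ → ℝ → ℝ)
    (hβB : ∀ q : Fin qmax, ∀ T, 0 ≤ T → ∀ y : ℝ → E n,
      IsDISol (fun uu => f q uu (gradient Jf uu)) Uh T y →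
      ∀ τ ∈ Icc (0:ℝ) T, infDist (y τ) O ≤ βf q (infDist (y 0) O) τ)
    {x : Arc (E n × ℝ × ℝ)} (hx : IsSolution (swADT qmax f Jf Uh N₀ η₁) x)
    {j : ℕ} {b t : ℝ} (hbt : b ≤ t) (hb : b ∈ slice x.dom j) (ht : t ∈ slice x.dom j) :
    ∃ q : Fin qmax,
      infDist (x.val (t, j)).1 O ≤ βf q (infDist (x.val (b, j)).1 O) (t - b) := by
  rcases eq_or_lt_of_le hbt with heq | hlt
  · -- constant solution with T = 0
    subst heq
    refine ⟨⟨0, hq⟩, ?_⟩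
    have hmem : x.val (b, j) ∈ Uh ×ˢ Qset qmax ×ˢ Icc (0:ℝ) N₀ := memC hUcl hx b j hb
    have hDI : IsDISol (fun uu => f ⟨0, hq⟩ uu (gradient Jf uu)) Uh 0
        (fun _ => (x.val (b, j)).1) := by
      refine ⟨hmem.1, fun _ => 0, intervalIntegrable_const, ?_, ?_⟩
      · have hz : (volume.restrict (Icc (0:ℝ) 0)) = 0 := by
          apply Measure.restrict_eq_zero.mpr
          simp
        rw [hz]
        simp
      · intro τ hτ
        have : τ = 0 := le_antisymm hτ.2 hτ.1
        subst this
        simp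
    have := hβB ⟨0, hq⟩ 0 le_rfl _ hDI 0 ⟨le_rfl, le_rfl⟩
    simpa using this
  · obtain ⟨v, hae, hint⟩ := hx.2.1 j
    have hOrd := slice_ordConnected x.htd j
    have hIccs : Icc b t ⊆ slice x.dom j := hOrd.out hb ht
    have hae' := (ae_restrict_iff' (slice_measurable x.htd j)).mp hae
    have hmemb : x.val (b, j) ∈ Uh ×ˢ Qset qmax ×ˢ Icc (0:ℝ) N₀ := memC hUcl hx b j hb
    obtain ⟨k₀, hk₀⟩ := hmemb.2.1
    -- the switching signal is constant along the interval
    have hconst : ∀ τ ∈ Icc b t, (x.val (τ, j)).2.1 = (x.val (b, j)).2.1 := by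
      intro τ hτ
      have h2 := hint τ (hIccs hτ) b hb
      have h3 : (x.val (τ, j)).2.1 - (x.val (b, j)).2.1 = ∫ s in b..τ, P2 n (v s) := by
        have h4 := congrArg (P2 n) h2.2
        rw [map_sub] at h4
        rw [P2_apply, P2_apply] at h4
        rw [h4, (P2 n).intervalIntegral_comp_comm h2.1]
      have h5 : ∫ s in b..τ, P2 n (v s) = 0 := by
        rw [intervalIntegral.integral_congr_ae (g := fun _ => (0:ℝ)) ?_]
        · simp
        · filter_upwards [hae'] with s hs
          intro hsmem
          have hsIcc : s ∈ Icc b t := by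
            rw [uIoc_of_le hτ.1] at hsmem
            exact ⟨le_of_lt hsmem.1, le_trans hsmem.2 hτ.2⟩
          obtain ⟨_, hvF⟩ := hs (hIccs hsIcc)
          obtain ⟨_, hv2, _⟩ := hvF
          rw [P2_apply]
          exact hv2
      rw [h5] at h3
      linarith [sub_eq_zero.mp h3]
    -- identify the mode
    have hae2 : ∀ᵐ τ ∂(volume.restrict (Icc b t)),
        (x.val (τ, j)).1 ∈ Uh ∧
        (v τ).1 ∈ f k₀ (x.val (τ, j)).1 (gradient Jf (x.val (τ, j)).1) := by
      apply (ae_restrict_iff' measurableSet_Icc).mpr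
      filter_upwards [hae'] with τ h1
      intro hτ
      obtain ⟨hC, hF⟩ := h1 (hIccs hτ)
      refine ⟨hC.1, ?_⟩
      obtain ⟨⟨k, hk, hvk⟩, _, _⟩ := hF
      have hkk : k = k₀ := by
        have h2 : ((k:ℕ):ℝ) + 1 = ((k₀:ℕ):ℝ) + 1 := by
          rw [← hk, hconst τ hτ, hk₀]
        have h3 : ((k:ℕ):ℝ) = ((k₀:ℕ):ℝ) := by linarith
        have h4 : (k:ℕ) = (k₀:ℕ) := by exact_mod_cast h3
        exact Fin.val_injective h4
      rw [← hkk]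
      exact hvk
    -- build the constrained DI solution
    set y : ℝ → E n := fun τ => (x.val (b + τ, j)).1 with hy
    set w : ℝ → E n := fun τ => (v (b + τ)).1 with hw
    have hby : ∀ τ, τ ∈ Icc (0:ℝ) (t - b) → b + τ ∈ Icc b t := by
      intro τ hτ
      exact ⟨by linarith [hτ.1], by linarith [hτ.2]⟩
    have hDI : IsDISol (fun uu => f k₀ uu (gradient Jf uu)) Uh (t - b) y := by
      refine ⟨?_, w, ?_, ?_, ?_⟩
      · show (x.val (b + 0, j)).1 ∈ Uh
        rw [add_zero]
        exact hmemb.1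
      · -- integrability
        have h1 : IntervalIntegrable v volume b t := (hint t ht b hb).1
        have h2 : IntervalIntegrable (fun s => P1 n (v s)) volume b t :=
          ⟨(P1 n).integrable_comp h1.1, (P1 n).integrable_comp h1.2⟩
        have h3 := h2.comp_add_left b
        rw [sub_self] at h3; exact h3
      · -- a.e. conditions, by translation
        have h3 := (ae_restrict_iff' measurableSet_Icc).mp hae2
        have hqmp : Measure.QuasiMeasurePreserving (fun τ : ℝ => b + τ) volume volume :=
          (measurePreserving_add_left volume b).quasiMeasurePreserving
        have h4 := hqmp.ae h3
        apply (ae_restrict_iff' measurableSet_Icc).mpr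
        filter_upwards [h4] with τ h5
        intro hτ
        exact h5 (hby τ hτ)
      · intro τ hτ
        have hbτ : b + τ ∈ Icc b t := hby τ hτ
        have h2 := hint (b + τ) (hIccs hbτ) b hb
        have h3 : y τ - y 0 = ∫ s in b..(b+τ), P1 n (v s) := by
          have h4 := congrArg (P1 n) h2.2
          rw [map_sub] at h4
          rw [P1_apply, P1_apply] at h4
          have h5 : y τ = (x.val (b + τ, j)).1 := rfl
          have h6 : y 0 = (x.val (b, j)).1 := by rw [hy]; simp
          rw [h5, h6, h4, (P1 n).intervalIntegral_comp_comm h2.1]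
        have h7 : (∫ s in (0:ℝ)..τ, w s) = ∫ s in b..(b+τ), P1 n (v s) := by
          have h8 := intervalIntegral.integral_comp_add_left
            (a := (0:ℝ)) (b := τ) (fun s => P1 n (v s)) b
          rw [add_zero] at h8
          exact h8
        rw [h7, ← h3]
        abel
    have hcl := hβB k₀ (t - b) (by linarith) y hDI (t - b) ⟨by linarith, le_rfl⟩
    refine ⟨k₀, ?_⟩
    have hyt : y (t - b) = (x.val (t, j)).1 := by
      rw [hy]
      simp only []
      congr 2
      ring
    have hy0 : y 0 = (x.val (b, j)).1 := by rw [hy]; simp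
    rwa [hyt, hy0] at hcl

/-- The timer grows at rate at most `η₁` along a flow interval. -/
lemma tau_growth {x : Arc (E n × ℝ × ℝ)}
    (hx : IsSolution (swADT qmax f Jf Uh N₀ η₁) x)
    {j : ℕ} {b t : ℝ} (hbt : b ≤ t) (hb : b ∈ slice x.dom j) (ht : t ∈ slice x.dom j) :
    (x.val (t, j)).2.2 ≤ (x.val (b, j)).2.2 + η₁ * (t - b) := by
  obtain ⟨v, hae, hint⟩ := hx.2.1 j
  have hOrd := slice_ordConnected x.htd j
  have hIccs : Icc b t ⊆ slice x.dom j := hOrd.out hb ht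
  have hae' := (ae_restrict_iff' (slice_measurable x.htd j)).mp hae
  have h2 := hint t ht b hb
  have h3 : (x.val (t, j)).2.2 - (x.val (b, j)).2.2 = ∫ s in b..t, P3 n (v s) := by
    have h4 := congrArg (P3 n) h2.2
    rw [map_sub] at h4
    rw [P3_apply, P3_apply] at h4
    rw [h4, (P3 n).intervalIntegral_comp_comm h2.1]
  have hi3 : IntervalIntegrable (fun s => P3 n (v s)) volume b t :=
    ⟨(P3 n).integrable_comp h2.1.1, (P3 n).integrable_comp h2.1.2⟩
  have h5 : (∫ s in b..t, P3 n (v s)) ≤ ∫ _ in b..t, η₁ := by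
    apply intervalIntegral.integral_mono_ae_restrict hbt hi3 intervalIntegrable_const
    apply (ae_restrict_iff' measurableSet_Icc).mpr
    filter_upwards [hae'] with s hs
    intro hsmem
    obtain ⟨_, hvF⟩ := hs (hIccs hsmem)
    obtain ⟨_, _, hv3⟩ := hvF
    rw [P3_apply]
    exact hv3.2
  have h6 : (∫ _ in b..t, η₁) = (t - b) * η₁ := by
    rw [intervalIntegral.integral_const, smul_eq_mul]
  rw [h6] at h5
  have h7 : (x.val (t, j)).2.2 - (x.val (b, j)).2.2 ≤ (t - b) * η₁ := by rw [h3]; exact h5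
  have h8 : (t - b) * η₁ = η₁ * (t - b) := mul_comm _ _
  linarith

end FlowLemmas

section BetaBar

lemma beta_small {β : ℝ → ℝ → ℝ} (hβ : ClassKL β) {u : ℝ} (hu : 0 ≤ u) :
    ∀ ε > (0:ℝ), ∃ ρ > (0:ℝ), ∀ r, 0 ≤ r → r ≤ ρ → β r u ≤ ε := by
  intro ε hε
  obtain ⟨d, hd, hball⟩ := (Metric.tendsto_nhdsWithin_nhds.mp (hβ.2.2.2.1 u hu)) ε hε
  refine ⟨d/2, by positivity, fun r hr hrle => ?_⟩
  rcases eq_or_lt_of_le hr with h0 | h0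
  · rw [← h0, kl_zero hβ hu]; exact le_of_lt hε
  · have := hball h0 (by rw [Real.dist_eq, sub_zero, abs_of_nonneg hr]; linarith)
    rw [Real.dist_eq, sub_zero] at this
    exact le_of_lt (lt_of_le_of_lt (le_abs_self _) this)

lemma sum_KL {m : ℕ} (βf : Fin m → ℝ → ℝ → ℝ) (h : ∀ q, ClassKL (βf q)) :
    ClassKL (fun r s => ∑ q, βf q r s) := by
  refine ⟨?_, ?_, ?_, ?_, ?_⟩
  · intro r s hr hs; exact Finset.sum_nonneg fun q _ => (h q).1 r s hr hs
  · intro s hs r hr r' hr' hle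
    exact Finset.sum_le_sum fun q _ => (h q).2.1 s hs hr hr' hle
  · intro r hr s hs s' hs' hle
    exact Finset.sum_le_sum fun q _ => (h q).2.2.1 r hr hs hs' hle
  · intro s hs
    have := tendsto_finset_sum (Finset.univ : Finset (Fin m))
      (fun q _ => (h q).2.2.2.1 s hs)
    simpa using this
  · intro r hr
    have := tendsto_finset_sum (Finset.univ : Finset (Fin m))
      (fun q _ => (h q).2.2.2.2 r hr)
    simpa using this

lemma betaBar_KL {β : ℝ → ℝ → ℝ} (hβ : ClassKL β) (K : ℕ) :
    ClassKL (fun r s => (Gh β)^[K+1] (β ((Gh β)^[K] r) (max 0 ((s - K)/(K+1))))) := by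
  have hKpos : (0:ℝ) < (K:ℝ) + 1 := by positivity
  have hφnn : ∀ s : ℝ, 0 ≤ max 0 ((s - K)/(K+1)) := fun s => le_max_left _ _
  have hφmono : ∀ s s' : ℝ, s ≤ s' → max 0 ((s - K)/(K+1)) ≤ max 0 ((s' - K)/(K+1)) := by
    intro s s' h
    exact max_le_max le_rfl (by gcongr <;> linarith)
  refine ⟨?_, ?_, ?_, ?_, ?_⟩
  · intro r s hr _
    exact iterGh_nonneg β (K+1) (hβ.1 _ _ (iterGh_nonneg β K hr) (hφnn s))
  · intro s _ r hr r' hr' hle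
    have h1 : (Gh β)^[K] r ≤ (Gh β)^[K] r' := iterGh_mono hβ K hr hr' hle
    have h2 : β ((Gh β)^[K] r) (max 0 ((s - K)/(K+1))) ≤
        β ((Gh β)^[K] r') (max 0 ((s - K)/(K+1))) :=
      hβ.2.1 _ (hφnn s) (iterGh_nonneg β K hr) (iterGh_nonneg β K hr') h1
    exact iterGh_mono hβ (K+1) (hβ.1 _ _ (iterGh_nonneg β K hr) (hφnn s))
      (hβ.1 _ _ (iterGh_nonneg β K hr') (hφnn s)) h2
  · intro r hr s _ s' _ hle
    have h1 := hφmono s s' hle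
    have h2 : β ((Gh β)^[K] r) (max 0 ((s' - K)/(K+1))) ≤
        β ((Gh β)^[K] r) (max 0 ((s - K)/(K+1))) :=
      hβ.2.2.1 _ (iterGh_nonneg β K hr) (hφnn s) (hφnn s') h1
    exact iterGh_mono hβ (K+1) (hβ.1 _ _ (iterGh_nonneg β K hr) (hφnn s'))
      (hβ.1 _ _ (iterGh_nonneg β K hr) (hφnn s)) h2
  · intro s _
    apply Metric.tendsto_nhdsWithin_nhds.mpr
    intro ε hε
    obtain ⟨ρ₁, hρ₁, h₁⟩ := iterGh_small hβ (K+1) (ε/2) (by positivity)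
    obtain ⟨ρ₂, hρ₂, h₂⟩ := beta_small hβ (hφnn s) ρ₁ hρ₁
    obtain ⟨ρ₃, hρ₃, h₃⟩ := iterGh_small hβ K ρ₂ hρ₂
    refine ⟨ρ₃, hρ₃, fun {x} hx hdist => ?_⟩
    rw [Real.dist_eq, sub_zero, abs_of_nonneg (le_of_lt hx)] at hdist
    have ha1 : (Gh β)^[K] x ≤ ρ₂ := h₃ x (le_of_lt hx) (le_of_lt hdist)
    have ha2 : β ((Gh β)^[K] x) (max 0 ((s - K)/(K+1))) ≤ ρ₁ :=
      h₂ _ (iterGh_nonneg β K (le_of_lt hx)) ha1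
    have ha3 : (Gh β)^[K+1] (β ((Gh β)^[K] x) (max 0 ((s - K)/(K+1)))) ≤ ε/2 :=
      h₁ _ (hβ.1 _ _ (iterGh_nonneg β K (le_of_lt hx)) (hφnn s)) ha2
    rw [Real.dist_eq, sub_zero, abs_of_nonneg]
    · linarith
    · exact iterGh_nonneg β (K+1) (hβ.1 _ _ (iterGh_nonneg β K (le_of_lt hx)) (hφnn s))
  · intro r hr
    apply Metric.tendsto_atTop.mpr
    intro ε hε
    obtain ⟨ρ₁, hρ₁, h₁⟩ := iterGh_small hβ (K+1) (ε/2) (by positivity)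
    obtain ⟨N, hN⟩ := Metric.tendsto_atTop.mp (hβ.2.2.2.2 _ (iterGh_nonneg β K hr)) ρ₁ hρ₁
    set N' := max N 0 with hN'
    refine ⟨(K:ℝ) + ((K:ℝ)+1) * (N' + 1), fun s hs => ?_⟩
    have hφN : N ≤ max 0 ((s - K)/(K+1)) := by
      have h2 : (K:ℝ)+1 ≤ s - K - ((K:ℝ)+1) * N' := by nlinarith [le_max_right N 0]
      have h3 : N' + 1 ≤ (s - K)/(K+1) := by
        rw [le_div_iff₀ hKpos]; nlinarith
      have h4 : (N:ℝ) ≤ N' + 1 := by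
        have := le_max_left N (0:ℝ); linarith
      exact le_trans h4 (le_trans h3 (le_max_right _ _))
    have ha1 : β ((Gh β)^[K] r) (max 0 ((s - K)/(K+1))) ≤ ρ₁ := by
      have := hN _ hφN
      rw [Real.dist_eq, sub_zero] at this
      exact le_of_lt (lt_of_le_of_lt (le_abs_self _) this)
    have ha2 : (Gh β)^[K+1] (β ((Gh β)^[K] r) (max 0 ((s - K)/(K+1)))) ≤ ε/2 :=
      h₁ _ (hβ.1 _ _ (iterGh_nonneg β K hr) (hφnn s)) ha1
    rw [Real.dist_eq, sub_zero, abs_of_nonneg]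
    · linarith
    · exact iterGh_nonneg β (K+1) (hβ.1 _ _ (iterGh_nonneg β K hr) (hφnn s))

end BetaBar
/-- Proposition 2 of the paper: seeking with slow, average
dwell-time switching between individually stabilizing modes. -/
theorem statement11
    {n : ℕ} (qmax : ℕ) (hq : 0 < qmax)
    (f : Fin qmax → E n → E n → Set (E n))
    (Uh : Set (E n)) (hUcl : IsClosed Uh)
    (J : E n → ℝ) (hJ : ContDiff ℝ 1 J)
    (O : Set (E n)) (hOcp : IsCompact O) (hOne : O.Nonempty) (hOU : O ⊆ Uh)
    -- regularity of each mode
    (hreg : ∀ q : Fin qmax,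
      OSCRel (fun uu => f q uu (gradient J uu)) Uh ∧
      LocBddRel (fun uu => f q uu (gradient J uu)) Uh ∧
      (∀ uu ∈ Uh, (f q uu (gradient J uu)).Nonempty ∧ Convex ℝ (f q uu (gradient J uu))))
    -- each mode renders O UGAS
    (hugas : ∀ q : Fin qmax, DI_UGAS (fun uu => f q uu (gradient J uu)) Uh O)
    (N₀ : ℝ) (hN₀ : 1 ≤ N₀) :
    SGPAS1 (fun η₁ => swADT qmax f J Uh N₀ η₁)
      (O ×ˢ Qset qmax ×ˢ Icc 0 N₀) := by
  classical
  have hugas' : ∀ q : Fin qmax, ∃ β, ClassKL β ∧ ∀ T, 0 ≤ T → ∀ y : ℝ → E n,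
      IsDISol (fun uu => f q uu (gradient J uu)) Uh T y →
      ∀ τ ∈ Icc (0:ℝ) T, infDist (y τ) O ≤ β (infDist (y 0) O) τ := hugas
  choose βf hβfKL hβfB using hugas'
  set βm : ℝ → ℝ → ℝ := fun r s => ∑ q, βf q r s with hβm
  have hβmKL : ClassKL βm := sum_KL βf hβfKL
  have hβmge : ∀ (q : Fin qmax) (r s : ℝ), 0 ≤ r → 0 ≤ s → βf q r s ≤ βm r s := by
    intro q r s hr hs
    exact Finset.single_le_sum (f := fun q => βf q r s)
      (fun i _ => (hβfKL i).1 r s hr hs) (Finset.mem_univ q)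
  set K : ℕ := 2 * ⌈N₀⌉₊ + 1 with hKdef
  have hK : 2 * N₀ + 1 ≤ (K:ℝ) := by
    have h1 : N₀ ≤ (⌈N₀⌉₊ : ℝ) := Nat.le_ceil N₀
    rw [hKdef]
    push_cast
    linarith
  refine ⟨fun r s => (Gh βm)^[K+1] (βm ((Gh βm)^[K] r) (max 0 ((s - K)/(K+1)))),
    betaBar_KL hβmKL K, ?_⟩
  intro Δ ν hν hνΔ
  have hΔpos : 0 < Δ := lt_trans hν hνΔ
  -- choose ν'
  obtain ⟨ρ, hρ, hρs⟩ := iterGh_small hβmKL (K+1) ν hν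
  set ν' : ℝ := min ρ Δ with hν'def
  have hν'pos : 0 < ν' := lt_min hρ hΔpos
  have hν'Δ : ν' ≤ Δ := min_le_right _ _
  have hν'ν : (Gh βm)^[K+1] ν' ≤ ν := hρs ν' (le_of_lt hν'pos) (min_le_left _ _)
  -- choose δ
  obtain ⟨Nδ, hNδ⟩ := Metric.tendsto_atTop.mp
    (hβmKL.2.2.2.2 ((Gh βm)^[K] Δ) (iterGh_nonneg βm K (le_of_lt hΔpos))) ν' hν'pos
  set δ : ℝ := max Nδ 1 with hδdef
  have hδpos : 0 < δ := lt_of_lt_of_le zero_lt_one (le_max_right _ _)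
  have hδν' : βm ((Gh βm)^[K] Δ) δ ≤ ν' := by
    have := hNδ δ (le_max_left _ _)
    rw [Real.dist_eq, sub_zero] at this
    exact le_of_lt (lt_of_le_of_lt (le_abs_self _) this)
  refine ⟨1/(2*δ), by positivity, ?_⟩
  intro η₁ hη₁
  intro x hxmax hxinit p hp
  obtain ⟨t, j⟩ := p
  have hsol : IsSolution (swADT qmax f J Uh N₀ η₁) x := hxmax.1
  have hηpos : 0 < η₁ := hη₁.1
  have hηδ : η₁ * δ ≤ 1/2 := by
    have h1 : η₁ < 1/(2*δ) := hη₁.2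
    have h2 : η₁ * δ < (1/(2*δ)) * δ := mul_lt_mul_of_pos_right h1 hδpos
    have h3 : (1/(2*δ)) * δ = 1/2 := by field_simp
    linarith
  -- the path through the hybrid time domain
  obtain ⟨ts, hts0, htsmono, htslast, hpiece, hfinal⟩ := htd_path x.htd hp
  have hval := memC hUcl hsol
  have hdom : ∀ i, i ≤ j → (ts i, i) ∈ x.dom := by
    intro i hi
    rcases eq_or_lt_of_le hi with rfl | hlt
    · exact hfinal (ts i) ⟨le_rfl, htslast⟩
    · exact hpiece i hlt (ts i) ⟨le_rfl, htsmono i hlt⟩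
  have hdom1 : ∀ i, i < j → (ts (i+1), i) ∈ x.dom := fun i hi =>
    hpiece i hi (ts (i+1)) ⟨htsmono i hi, le_rfl⟩
  -- flow bound along intervals
  have hflow : ∀ (jj : ℕ) (b t' : ℝ), b ≤ t' → b ∈ slice x.dom jj → t' ∈ slice x.dom jj →
      infDist (x.val (t', jj)).1 O ≤ βm (infDist (x.val (b, jj)).1 O) (t' - b) := by
    intro jj b t' hbt hb ht
    obtain ⟨q, hq'⟩ := flow_decay hUcl hq βf hβfB hsol hbt hb ht
    exact le_trans hq' (hβmge q _ _ infDist_nonneg (by linarith))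
  -- the distance sequence
  set a : ℕ → ℝ := fun i => infDist ((x.val (ts i, i)).1) O with ha
  have hannoneg : ∀ i, 0 ≤ a i := fun i => infDist_nonneg
  -- jump relations
  have hjump : ∀ i, i < j → x.val (ts (i+1), i) ∈ (swADT qmax f J Uh N₀ η₁).D ∧
      x.val (ts (i+1), i+1) ∈ (swADT qmax f J Uh N₀ η₁).G (x.val (ts (i+1), i)) :=
    fun i hi => hsol.2.2 (ts (i+1)) i (hdom1 i hi) (hdom i.succ (by omega))
  have hstep : ∀ i, i < j → a (i+1) ≤ βm (a i) (ts (i+1) - ts i) := by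
    intro i hi
    have hG := (hjump i hi).2
    have h1 : (x.val (ts (i+1), i+1)).1 = (x.val (ts (i+1), i)).1 := hG.1
    have h2 : a (i+1) = infDist (x.val (ts (i+1), i)).1 O := by rw [ha]; simp only []; rw [h1]
    rw [h2]
    exact hflow i (ts i) (ts (i+1)) (htsmono i hi) (hdom i (by omega)) (hdom1 i hi)
  have hfin : infDist (x.val (t, j)).1 O ≤ βm (a j) (t - ts j) :=
    hflow j (ts j) t htslast (hdom j le_rfl) hp
  -- τ budget
  have htauval : ∀ i, i ≤ j → (x.val (ts i, i)).2.2 ∈ Icc (0:ℝ) N₀ := fun i hi =>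
    (hval (ts i) i (hdom i hi)).2.2
  have hbudgetaux : ∀ d i', i' + d ≤ j →
      (x.val (ts (i'+d), i'+d)).2.2 ≤ (x.val (ts i', i')).2.2 + η₁ * (ts (i'+d) - ts i') - d := by
    intro d
    induction d with
    | zero => intro i' _; simp
    | succ d ih =>
      intro i' hle
      have hi : i' + d < j := by omega
      have hG := (hjump (i'+d) hi).2
      have h1 : (x.val (ts (i'+d+1), i'+d+1)).2.2 = (x.val (ts (i'+d+1), i'+d)).2.2 - 1 :=
        hG.2.2
      have h2 : (x.val (ts (i'+d+1), i'+d)).2.2 ≤ (x.val (ts (i'+d), i'+d)).2.2 +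
          η₁ * (ts (i'+d+1) - ts (i'+d)) :=
        tau_growth hsol (htsmono _ hi) (hdom (i'+d) (by omega)) (hdom1 (i'+d) hi)
      have h3 := ih i' (by omega)
      have h4 : η₁ * (ts (i'+d+1) - ts i') =
          η₁ * (ts (i'+d+1) - ts (i'+d)) + η₁ * (ts (i'+d) - ts i') := by ring
      have h5 : i' + (d+1) = i' + d + 1 := by omega
      rw [h5]
      push_cast
      push_cast at h3
      linarith
  have hbudget : ∀ i' i, i' ≤ i → i ≤ j → (i:ℝ) - (i':ℝ) ≤ N₀ + η₁ * (ts i - ts i') := by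
    intro i' i hii hij
    have hd : i' + (i - i') = i := by omega
    have h1 := hbudgetaux (i - i') i' (by omega)
    rw [hd] at h1
    have h2 := (htauval i hij).1
    have h3 := (htauval i' (by omega)).2
    have h4 : ((i - i' : ℕ):ℝ) = (i:ℝ) - (i':ℝ) := by
      have : (i':ℝ) ≤ (i:ℝ) := by exact_mod_cast hii
      push_cast [Nat.cast_sub hii]
      ring
    rw [h4] at h1
    linarith
  -- a 0 ≤ Δ
  have hmem00 := hval 0 0 x.init
  have hA00 : infDist (x.val (0, 0)) (O ×ˢ Qset qmax ×ˢ Icc 0 N₀) =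
      infDist (x.val (0, 0)).1 O :=
    infDist_prod_eq hOcp hOne hq (by linarith) hmem00.2.1 hmem00.2.2
  have haΔ : a 0 ≤ Δ := by
    rw [ha]
    simp only [hts0]
    rw [← hA00]
    exact hxinit
  -- conclusion
  have hmemtj := hval t j hp
  have hAtj : infDist (x.val (t, j)) (O ×ˢ Qset qmax ×ˢ Icc 0 N₀) =
      infDist (x.val (t, j)).1 O :=
    infDist_prod_eq hOcp hOne hq (by linarith) hmemtj.2.1 hmemtj.2.2
  have hkey := key hβmKL hN₀ hK hν hν'pos hν'Δ hν'ν hδpos hδν' hηpos hηδ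
    hts0 htsmono htslast hannoneg haΔ (infDist_nonneg) hstep hfin hbudget
  simp only []
  rw [hAtj]
  have hA00' : infDist (x.val (0, 0)) (O ×ˢ Qset qmax ×ˢ Icc 0 N₀) = a 0 := by
    rw [hA00, ha]; simp only [hts0]
  rw [hA00']
  exact hkey

end HS
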